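/- With L as above and α(0) = (1/p)∑_{j=0}^{p−1} r_j, suppose 1 − α(0) is invertible in Frac(R). Then 1 − L is invertible on the space of Frac(R)-valued Schwartz–Bruhat functions on ℤ_p, and for n ≥ 0, k ∈ {0,...,p^n−1}, the inverse sends the indicator of {z ≡ k mod p^n} to S_{n,k}(z) = (1/(1−α(0)))·(r_0^n κ(k)/p^n) + ∑_{m=0}^{n−1} (r_0^m κ([k]_{p^m})/p^m)·[z ≡ θ_p^{∘m}(k) mod p^{n−m}]. In particular (1 − L){S_{n,k}}(z) = [z ≡ k mod p^n] identically. -/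

import Mathlib

/-- The digit stream of `p·z + j`. -/
def consDigit {p : ℕ} (j : Fin p) (z : ℕ → Fin p) : ℕ → Fin p
  | 0 => j
  | i + 1 => z i

/-- `[z]_{p^n}`: the residue of `z` (given by its digit stream) mod `p^n`. -/
def trunc {p : ℕ} (z : ℕ → Fin p) (n : ℕ) : ℕ :=
  ∑ i ∈ Finset.range n, (z i : ℕ) * p ^ i

/-- The sorting operator `L{φ}(z) = (1/p)∑_{k<p} r_k φ(pz+k)` on functions `ℤ_p → K`. -/
def sortOp {p : ℕ} {K : Type*} [Field K] (r : Fin p → K)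
    (φ : (ℕ → Fin p) → K) : (ℕ → Fin p) → K :=
  fun z => (p : K)⁻¹ * ∑ j : Fin p, r j * φ (consDigit j z)

/-- `κ(m) = ∏_{j=1}^{p−1}(r_j/r_0)^{#_{p:j}(m)}` for a natural number `m`. -/
def kappaN {p : ℕ} [NeZero p] {K : Type*} [Field K] (r : Fin p → K) (m : ℕ) : K :=
  ∏ j ∈ Finset.univ.filter (fun j : Fin p => j ≠ 0),
    (r j / r 0) ^ ((Nat.digits p m).count (j : ℕ))

/-- A function is Schwartz–Bruhat (locally constant) if it depends on finitely many digits. -/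
def IsSB {p : ℕ} {K : Type*} (φ : (ℕ → Fin p) → K) : Prop :=
  ∃ N : ℕ, ∀ z w : ℕ → Fin p, (∀ i < N, z i = w i) → φ z = φ w

/-- The explicit preimage `S_{n,k}` of the indicator `[z ≡ k mod p^n]` under `1 − L`. -/
def Sfun {p : ℕ} [NeZero p] {K : Type*} [Field K] (r : Fin p → K) (n k : ℕ) :
    (ℕ → Fin p) → K :=
  fun z =>
    (1 - (p : K)⁻¹ * ∑ j : Fin p, r j)⁻¹ * (r 0 ^ n * kappaN r k / (p : K) ^ n)
      + ∑ m ∈ Finset.range n,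
          r 0 ^ m * kappaN r (k % p ^ m) / (p : K) ^ m
            * (if trunc z (n - m) = k / p ^ m then (1 : K) else 0)


/-!
`L` shifts the digit stream: it sends the indicator of `z ≡ q mod p^(n+1)` to
`(r_(q mod p) / p)` times the indicator of `z ≡ ⌊q/p⌋ mod p^n`, and a constant `c` to
`α(0) c`.
The coefficients `r₀^m κ([k]_{p^m}) / p^m` of `S_{n,k}` are chosen so that `L` shifts the index
`m` of its sum by one, hence `(1 − L) S_{n,k}` telescopes to the indicator of `z ≡ k mod p^n`.
A Schwartz–Bruhat function depending on `N` digits is a combination of the indicators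
mod `p^N`, which gives existence. For uniqueness, a fixed point of `L` depending on `N + 1`
digits depends on only `N` of them, so it is a constant `c = α(0) c`, i.e. `c = 0`.
-/

open Finset

section Digits

variable {p : ℕ}

theorem trunc_succ (z : ℕ → Fin p) (n : ℕ) : trunc z (n + 1) = trunc z n + z n * p ^ n :=
  sum_range_succ _ _

theorem trunc_consDigit (j : Fin p) (z : ℕ → Fin p) (n : ℕ) :
    trunc (consDigit j z) (n + 1) = j + p * trunc z n := by
  simp only [trunc, sum_range_succ', consDigit, pow_zero, mul_one, pow_succ, mul_sum]
  rw [add_comm]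
  congr 1
  exact sum_congr rfl fun i _ => by ring

theorem consDigit_head_tail (z : ℕ → Fin p) : consDigit (z 0) (fun i => z (i + 1)) = z := by
  funext i
  cases i <;> rfl

theorem trunc_congr {z w : ℕ → Fin p} {n : ℕ} (h : ∀ i < n, z i = w i) :
    trunc z n = trunc w n :=
  sum_congr rfl fun i hi => by rw [h i (mem_range.mp hi)]

theorem trunc_lt_pow (z : ℕ → Fin p) (n : ℕ) : trunc z n < p ^ n := by
  induction n with
  | zero => simp [trunc]
  | succ n ih =>
    calc trunc z (n + 1) < p ^ n + z n * p ^ n := by rw [trunc_succ]; omega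
      _ = (z n + 1) * p ^ n := by ring
      _ ≤ p * p ^ n := Nat.mul_le_mul_right _ (z n).isLt
      _ = p ^ (n + 1) := (pow_succ' p n).symm

theorem trunc_consDigit_div_mod (j : Fin p) (z : ℕ → Fin p) (n : ℕ) :
    trunc (consDigit j z) (n + 1) / p = trunc z n ∧
      trunc (consDigit j z) (n + 1) % p = j :=
  (Nat.div_mod_unique j.pos).2 ⟨(trunc_consDigit j z n).symm, j.isLt⟩

variable [NeZero p]

def digitStream (k : ℕ) : ℕ → Fin p :=
  fun i => ⟨k / p ^ i % p, Nat.mod_lt _ (NeZero.pos p)⟩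

theorem digitStream_trunc {i N : ℕ} (z : ℕ → Fin p) (hi : i < N) :
    digitStream (trunc z N) i = z i := by
  induction i generalizing N z with
  | zero =>
    obtain ⟨t, rfl⟩ : ∃ t, N = t + 1 := ⟨N - 1, by omega⟩
    rw [← consDigit_head_tail z]
    refine Fin.ext ?_
    simp only [digitStream, pow_zero, Nat.div_one]
    exact (trunc_consDigit_div_mod (z 0) _ t).2
  | succ i ih =>
    obtain ⟨t, rfl⟩ : ∃ t, N = t + 1 := ⟨N - 1, by omega⟩
    rw [← consDigit_head_tail z]
    refine Fin.ext ?_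
    simp only [digitStream, pow_succ', ← Nat.div_div_eq_div_mul,
      (trunc_consDigit_div_mod _ _ t).1]
    exact congrArg Fin.val (ih _ (by omega : i < t))

end Digits

theorem Nat.count_digits_add_pow_mul {b j a c m : ℕ} (hb : 1 < b) (hj : j ≠ 0)
    (ha : a < b ^ m) :
    (b.digits (a + b ^ m * c)).count j = (b.digits a).count j + (b.digits c).count j := by
  rcases Nat.eq_zero_or_pos c with rfl | hc
  · simp
  obtain ⟨l, rfl⟩ := Nat.exists_eq_add_of_le ((Nat.digits_length_le_iff hb a).2 ha)
  rw [← Nat.digits_append_zeroes_append_digits hb hc]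
  simp [List.count_replicate, Ne.symm hj]

section Kappa

variable {p : ℕ} [NeZero p] {K : Type*} [Field K] (r : Fin p → K)

theorem kappaN_add_pow_mul {a c m : ℕ} (ha : a < p ^ m) :
    kappaN r (a + p ^ m * c) = kappaN r a * kappaN r c := by
  simp only [kappaN, ← prod_mul_distrib, ← pow_add]
  refine prod_congr rfl fun j hj => ?_
  have hj0 : (j : ℕ) ≠ 0 := Fin.val_ne_zero_iff.mpr (mem_filter.mp hj).2
  have hp : 1 < p := by have := j.isLt; omega
  rw [Nat.count_digits_add_pow_mul hp hj0 ha]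

theorem mul_kappaN_of_lt (hr0 : r 0 ≠ 0) {d : ℕ} (hd : d < p) :
    r 0 * kappaN r d = r ⟨d, hd⟩ := by
  rcases eq_or_ne d 0 with rfl | hd0
  · simp only [kappaN, Nat.digits_zero, List.count_nil, pow_zero, prod_const_one, mul_one]
    exact congrArg r (Fin.ext (Nat.zero_mod p))
  have hmem : (⟨d, hd⟩ : Fin p) ∈ univ.filter (fun j : Fin p => j ≠ 0) :=
    mem_filter.mpr ⟨mem_univ _, fun h => hd0 (by simpa using congrArg Fin.val h)⟩
  rw [kappaN, Nat.digits_of_lt p d hd0 hd, prod_eq_single_of_mem _ hmem fun j _ hj => ?_]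
  · simp only [List.count_singleton, beq_self_eq_true, if_true, pow_one]
    exact mul_div_cancel₀ _ hr0
  · have hdj : d ≠ j := fun h => hj (Fin.ext h.symm)
    simp [hdj]

theorem mul_kappaN_mod_pow_succ (hr0 : r 0 ≠ 0) (k m : ℕ) :
    r 0 * kappaN r (k % p ^ (m + 1))
      = kappaN r (k % p ^ m) * r ⟨k / p ^ m % p, Nat.mod_lt _ (NeZero.pos p)⟩ := by
  rw [Nat.mod_pow_succ, kappaN_add_pow_mul r (Nat.mod_lt _ (pow_pos (NeZero.pos p) m)),
    mul_left_comm, mul_kappaN_of_lt r hr0]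

end Kappa

def DependsOnDigits {p : ℕ} {K : Type*} (φ : (ℕ → Fin p) → K) (N : ℕ) : Prop :=
  ∀ z w : ℕ → Fin p, (∀ i < N, z i = w i) → φ z = φ w

theorem DependsOnDigits.mono {p : ℕ} {K : Type*} {φ : (ℕ → Fin p) → K} {N M : ℕ}
    (h : DependsOnDigits φ N) (hNM : N ≤ M) : DependsOnDigits φ M :=
  fun z w hzw => h z w fun i hi => hzw i (hi.trans_le hNM)

theorem DependsOnDigits.sub {p : ℕ} {K : Type*} [Sub K] {φ ψ : (ℕ → Fin p) → K} {N : ℕ}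
    (hφ : DependsOnDigits φ N) (hψ : DependsOnDigits ψ N) :
    DependsOnDigits (fun z => φ z - ψ z) N :=
  fun z w hzw => congrArg₂ (· - ·) (hφ z w hzw) (hψ z w hzw)

section SortOp

variable {p : ℕ} {K : Type*} [Field K] (r : Fin p → K)

theorem sortOp_apply_const_add (a : K) (φ : (ℕ → Fin p) → K) (z : ℕ → Fin p) :
    sortOp r (fun w => a + φ w) z = (p : K)⁻¹ * ∑ j, r j * a + sortOp r φ z := by
  simp only [sortOp, mul_add, sum_add_distrib]

theorem sortOp_apply_sub (φ ψ : (ℕ → Fin p) → K) (z : ℕ → Fin p) :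
    sortOp r (fun w => φ w - ψ w) z = sortOp r φ z - sortOp r ψ z := by
  simp only [sortOp, mul_sub, sum_sub_distrib]

theorem sortOp_apply_sum {ι : Type*} (s : Finset ι) (c : ι → K)
    (F : ι → (ℕ → Fin p) → K) (z : ℕ → Fin p) :
    sortOp r (fun w => ∑ i ∈ s, c i * F i w) z = ∑ i ∈ s, c i * sortOp r (F i) z := by
  simp only [sortOp, mul_sum]
  rw [sum_comm]
  exact sum_congr rfl fun i _ => sum_congr rfl fun j _ => by ring

theorem sortOp_indicator_trunc_succ [NeZero p] (n q : ℕ) (z : ℕ → Fin p) :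
    sortOp r (fun w => if trunc w (n + 1) = q then (1 : K) else 0) z
      = (p : K)⁻¹ * r ⟨q % p, Nat.mod_lt q (NeZero.pos p)⟩ *
          if trunc z n = q / p then 1 else 0 := by
  have hp := NeZero.pos p
  have hiff : ∀ j : Fin p, trunc (consDigit j z) (n + 1) = q ↔
      j = ⟨q % p, Nat.mod_lt q hp⟩ ∧ trunc z n = q / p := fun j => by
    rw [trunc_consDigit, Fin.ext_iff, ← and_comm, eq_comm (a := trunc z n), eq_comm (a := j.val),
      Nat.div_mod_unique hp]
    exact (and_iff_left j.isLt).symm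
  simp only [sortOp, hiff, ite_and, mul_ite, mul_one, mul_zero, Fintype.sum_ite_eq']

theorem DependsOnDigits.sortOp {φ : (ℕ → Fin p) → K} {N : ℕ}
    (h : DependsOnDigits φ (N + 1)) :
    DependsOnDigits (sortOp r φ) N := fun z w hzw => by
  unfold _root_.sortOp
  refine congrArg _ (sum_congr rfl fun j _ => congrArg _ (h _ _ fun i hi => ?_))
  cases i with
  | zero => rfl
  | succ i => exact hzw i (by omega)

theorem eq_zero_of_sortOp_eq (hα : 1 - (p : K)⁻¹ * ∑ j, r j ≠ 0)
    {φ : (ℕ → Fin p) → K} {N : ℕ} (hφ : DependsOnDigits φ N) (hfix : sortOp r φ = φ) :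
    φ = 0 := by
  induction N with
  | zero =>
    funext z
    have hconst : ∀ w, φ w = φ z := fun w => hφ w z fun i hi => absurd hi (Nat.not_lt_zero i)
    have hL : sortOp r φ z = ((p : K)⁻¹ * ∑ j, r j) * φ z := by
      simp only [sortOp, hconst, ← sum_mul, mul_assoc]
    have h : (1 - (p : K)⁻¹ * ∑ j, r j) * φ z = 0 := by
      rw [sub_mul, one_mul, ← hL, hfix, sub_self]
    exact (mul_eq_zero.mp h).resolve_left hα
  | succ N ih => exact ih (hfix ▸ hφ.sortOp r)

theorem eq_of_sub_sortOp_eq (hα : 1 - (p : K)⁻¹ * ∑ j, r j ≠ 0)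
    {φ ψ : (ℕ → Fin p) → K} (hφ : IsSB φ) (hψ : IsSB ψ)
    (h : ∀ z, φ z - sortOp r φ z = ψ z - sortOp r ψ z) : φ = ψ := by
  obtain ⟨M, hM⟩ := hφ
  obtain ⟨N, hN⟩ := hψ
  have hfix : sortOp r (fun z => φ z - ψ z) = fun z => φ z - ψ z := by
    funext z
    rw [sortOp_apply_sub]
    linear_combination -h z
  have hzero := eq_zero_of_sortOp_eq r hα
    ((DependsOnDigits.mono hM (le_max_left M N)).sub
      (DependsOnDigits.mono hN (le_max_right M N))) hfix
  funext z
  exact sub_eq_zero.mp (congrFun hzero z)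

end SortOp

section Sfun

variable {p : ℕ} [NeZero p] {K : Type*} [Field K] (r : Fin p → K)

theorem Sfun_coeff_succ (hr0 : r 0 ≠ 0) (k m : ℕ) :
    r 0 ^ m * kappaN r (k % p ^ m) / (p : K) ^ m *
        ((p : K)⁻¹ * r ⟨k / p ^ m % p, Nat.mod_lt _ (NeZero.pos p)⟩)
      = r 0 ^ (m + 1) * kappaN r (k % p ^ (m + 1)) / (p : K) ^ (m + 1) := by
  rw [pow_succ (r 0) m, mul_assoc (r 0 ^ m), mul_kappaN_mod_pow_succ r hr0]
  ring

theorem Sfun_sub_sortOp (hr0 : r 0 ≠ 0) (hα : 1 - (p : K)⁻¹ * ∑ j, r j ≠ 0) {n k : ℕ}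
    (hk : k < p ^ n) (z : ℕ → Fin p) :
    Sfun r n k z - sortOp r (Sfun r n k) z = if trunc z n = k then 1 else 0 := by
  set α : K := (p : K)⁻¹ * ∑ j, r j
  set A : K := r 0 ^ n * kappaN r k / (p : K) ^ n
  set f : ℕ → K := fun m => r 0 ^ m * kappaN r (k % p ^ m) / (p : K) ^ m *
      if trunc z (n - m) = k / p ^ m then 1 else 0
  have hL : sortOp r (Sfun r n k) z = α * ((1 - α)⁻¹ * A) + ∑ m ∈ range n, f (m + 1) := by
    unfold Sfun
    rw [sortOp_apply_const_add, sortOp_apply_sum, ← sum_mul, mul_assoc]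
    refine congrArg _ (sum_congr rfl fun m hm => ?_)
    rw [(by have := mem_range.mp hm; omega : n - m = n - (m + 1) + 1), sortOp_indicator_trunc_succ,
      ← mul_assoc, Sfun_coeff_succ r hr0, Nat.div_div_eq_div_mul, ← pow_succ]
  have hf0 : f 0 = if trunc z n = k then 1 else 0 := by
    simp [f, kappaN, Nat.mod_one]
  have hfn : f n = A := by
    simp [f, A, Nat.mod_eq_of_lt hk, Nat.div_eq_of_lt hk, trunc]
  calc Sfun r n k z - sortOp r (Sfun r n k) z
      = (1 - α) * ((1 - α)⁻¹ * A) + ∑ m ∈ range n, (f m - f (m + 1)) := by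
        rw [hL, sum_sub_distrib]
        simp only [Sfun]
        ring
    _ = _ := by
        rw [sum_range_sub', hf0, hfn, mul_inv_cancel_left₀ hα]
        ring

theorem dependsOnDigits_Sfun (n k : ℕ) : DependsOnDigits (Sfun r n k) n := fun z w hzw => by
  unfold Sfun
  refine congrArg _ (sum_congr rfl fun m _ => ?_)
  rw [trunc_congr fun i hi => hzw i (by omega)]

theorem exists_sub_sortOp_eq (hr0 : r 0 ≠ 0) (hα : 1 - (p : K)⁻¹ * ∑ j, r j ≠ 0)
    {ψ : (ℕ → Fin p) → K} {N : ℕ} (hψ : DependsOnDigits ψ N) :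
    ∃ φ, DependsOnDigits φ N ∧ ∀ z, φ z - sortOp r φ z = ψ z := by
  refine ⟨fun z => ∑ k ∈ range (p ^ N), ψ (digitStream k) * Sfun r N k z,
    fun z w hzw => sum_congr rfl fun k _ => by rw [dependsOnDigits_Sfun r N k z w hzw],
    fun z => ?_⟩
  rw [sortOp_apply_sum, ← sum_sub_distrib]
  simp only [← mul_sub]
  rw [sum_congr rfl fun k hk => by rw [Sfun_sub_sortOp r hr0 hα (mem_range.mp hk)]]
  simp only [mul_ite, mul_one, mul_zero, sum_ite_eq, mem_range, trunc_lt_pow, if_true]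
  exact hψ _ _ fun i hi => digitStream_trunc z hi

end Sfun

theorem stmt19_general {p : ℕ} [NeZero p] {K : Type*} [Field K]
    (r : Fin p → K) (hr : ∀ j, r j ≠ 0)
    (hα : 1 - (p : K)⁻¹ * ∑ j : Fin p, r j ≠ 0) :
    (∀ ψ : (ℕ → Fin p) → K, IsSB ψ →
      ∃! φ : (ℕ → Fin p) → K, IsSB φ ∧ ∀ z, φ z - sortOp r φ z = ψ z) ∧
    (∀ n k : ℕ, k < p ^ n →
      IsSB (Sfun r n k) ∧
      ∀ z, Sfun r n k z - sortOp r (Sfun r n k) z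
        = (if trunc z n = k then (1 : K) else 0)) := by
  refine ⟨fun ψ ⟨N, hψ⟩ => ?_,
    fun n k hk => ⟨⟨n, dependsOnDigits_Sfun r n k⟩, Sfun_sub_sortOp r (hr 0) hα hk⟩⟩
  obtain ⟨φ, hφ, hsolve⟩ := exists_sub_sortOp_eq r (hr 0) hα hψ
  exact ⟨φ, ⟨⟨N, hφ⟩, hsolve⟩, fun φ' ⟨hφ', hsolve'⟩ =>
    eq_of_sub_sortOp_eq r hα hφ' ⟨N, hφ⟩ fun z => by rw [hsolve', hsolve]⟩

/-- If `1 − α(0)` is invertible (`α(0) = (1/p)∑_j r_j`), then `1 − L` is invertible on the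
space of Schwartz–Bruhat functions, and the inverse sends the indicator of `{z ≡ k mod p^n}`
to `S_{n,k}`; in particular `(1−L){S_{n,k}} = [z ≡ k mod p^n]` identically. -/
theorem stmt19 {p : ℕ} [NeZero p] (hp : 2 ≤ p) {K : Type*} [Field K]
    (hpK : (p : K) ≠ 0) (r : Fin p → K) (hr : ∀ j, r j ≠ 0)
    (hα : 1 - (p : K)⁻¹ * ∑ j : Fin p, r j ≠ 0) :
    (∀ ψ : (ℕ → Fin p) → K, IsSB ψ →
      ∃! φ : (ℕ → Fin p) → K, IsSB φ ∧ ∀ z, φ z - sortOp r φ z = ψ z) ∧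
    (∀ n k : ℕ, k < p ^ n →
      IsSB (Sfun r n k) ∧
      ∀ z, Sfun r n k z - sortOp r (Sfun r n k) z
        = (if trunc z n = k then (1 : K) else 0)) :=
  stmt19_general r hr hα
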